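/- (Random Target Lemma for OQWs.) With the hypotheses of the Mean Hitting Time Formula for OQWs, D̂ invertible, and Tr(k̂_{ii}(η)) = c·Tr(η) for all i and η, the target time t_⊙(ρ) := ∑_{i=1}^k Tr((D̂^{−1}N̂)_{ij}(ρ)) does not depend on j; in fact for every density matrix ρ and every j, ∑_{i=1}^k Tr((D̂^{−1}N̂)_{ij}(ρ)) = (∑_{i=1}^k Tr(Ẑ_{ii}(ρ))) − 1. -/

import Mathlib

open Matrix Filter
open scoped ComplexOrder

noncomputable section

abbrev Mn (n : ℕ) : Type := Matrix (Fin n) (Fin n) ℂ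

abbrev BlockVec (n k : ℕ) : Type := Fin k → Mn n

/-- An open quantum random walk on `k` sites with degree of freedom `n`:
`∑ i, (B i j)ᴴ (B i j) = 1` for every `j`. -/
def IsOQW {n k : ℕ} (B : Fin k → Fin k → Mn n) : Prop :=
  ∀ j : Fin k, ∑ i : Fin k, (B i j)ᴴ * B i j = 1

/-- The block representation `Φ̂`: `(Φ̂ ρ) i = ∑ j, B i j * ρ j * (B i j)ᴴ`. -/
def blockRep {n k : ℕ} (B : Fin k → Fin k → Mn n) : Module.End ℂ (BlockVec n k) :=
  LinearMap.pi fun i => ∑ j : Fin k,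
    (LinearMap.mulRight ℂ (B i j)ᴴ).comp ((LinearMap.mulLeft ℂ (B i j)).comp (LinearMap.proj j))

/-- The map `Ω̂`: `(Ω̂ ρ) p = (1/(k n)) (∑ j, Tr (ρ j)) • 1` for every `p`. -/
def omegaMap (n k : ℕ) : Module.End ℂ (BlockVec n k) :=
  LinearMap.pi fun _ =>
    (LinearMap.toSpanSingleton ℂ (Mn n) (((k : ℂ) * (n : ℂ))⁻¹ • (1 : Mn n))).comp
      (∑ j : Fin k, (Matrix.traceLinearMap (Fin n) ℂ ℂ).comp (LinearMap.proj j))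

/-- Ergodic OQW: the iterates of the block representation converge to `Ω̂`. -/
def IsErgodic {n k : ℕ} (B : Fin k → Fin k → Mn n) : Prop :=
  ∀ ρ : BlockVec n k,
    Tendsto (fun r : ℕ => (blockRep B ^ r) ρ) atTop (nhds (omegaMap n k ρ))

/-- The product `B (x r) (x (r-1)) * ⋯ * B (x 1) (x 0)` along a path `x`. -/
def pathProd {n k : ℕ} (B : Fin k → Fin k → Mn n) : (r : ℕ) → (Fin (r+1) → Fin k) → Mn n
  | 0, _ => 1
  | r+1, x => B (x (Fin.last (r+1))) (x (Fin.last r).castSucc) *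
      pathProd B r (fun s => x s.castSucc)

/-- The index set of `π(i ← j; r)`: paths `x_0 = j, x_1, …, x_r = i` with `x_s ≠ i`
for `1 ≤ s ≤ r - 1`. -/
def pathsSet (k : ℕ) (i j : Fin k) (r : ℕ) : Finset (Fin (r+1) → Fin k) :=
  Finset.univ.filter fun x => x 0 = j ∧ x (Fin.last r) = i ∧
    ∀ s : Fin (r+1), s ≠ 0 → s ≠ Fin.last r → x s ≠ i

/-- The mean hitting time operator `k̂_{ij}(X) = ∑_{r ≥ 1} r ∑_{C ∈ π(i←j;r)} C X Cᴴ`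
(mean return time operator when `i = j`). -/
def khat {n k : ℕ} (B : Fin k → Fin k → Mn n) (i j : Fin k) (X : Mn n) : Mn n :=
  ∑' r : ℕ, ((r + 1 : ℕ) : ℂ) • ∑ x ∈ pathsSet k i j (r+1),
    pathProd B (r+1) x * X * (pathProd B (r+1) x)ᴴ

/-- The hitting probability `h_{ij}(σ) = ∑_{r ≥ 1} ∑_{C ∈ π(i←j;r)} Tr(C σ Cᴴ)`. -/
def hitSum {n k : ℕ} (B : Fin k → Fin k → Mn n) (i j : Fin k) (σ : Mn n) : ℂ :=
  ∑' r : ℕ, ∑ x ∈ pathsSet k i j (r+1),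
    (pathProd B (r+1) x * σ * (pathProd B (r+1) x)ᴴ).trace

/-- The `(i,j)` block of an operator on block vectors. -/
def blockOf {n k : ℕ} (T : Module.End ℂ (BlockVec n k)) (i j : Fin k) (X : Mn n) : Mn n :=
  T (Pi.single j X) i

/-!
Splitting a path from `j` to `i` at its first step gives
`k̂_{ij}(X) = h_{ij}(X) + ∑_{l ≠ i} k̂_{il}(B_{lj} X B_{lj}ᴴ)`, where `h_{ij}` is the hitting map;
as positive semidefinite matrices span `M_n(ℂ)`, hitting probability one means
`Tr h_{ij}(X) = Tr X` for every `X`. Summing over the starting site with the OQW condition, the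
functional `κ_i(v) = ∑_q Tr k̂_{iq}(v_q)` satisfies `κ_i(w - Φ̂w) + c Tr (Φ̂w)_i = ∑_q Tr w_q`.
For `w = Ẑv` we have `w - Φ̂w = v - Ω̂v`, and `Ẑ` preserves the total trace, so
`κ_i(v) + c Tr (Ẑv - v)_i` only depends on `∑_q Tr v_q`. Comparing `ρ` placed at site `j` and at
site `i` gives the mean hitting time formula `Tr k̂_{ij}(ρ) = c Tr (Ẑ_{ii}ρ - Ẑ_{ij}ρ)` for `i ≠ j`.
As `D̂⁻¹` scales traces by `c⁻¹`, the target time is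
`∑_i Tr Ẑ_{ii}ρ - ∑_i Tr Ẑ_{ij}ρ = ∑_i Tr Ẑ_{ii}ρ - Tr ρ`.
-/

theorem tsum_natCast_succ_smul {R E : Type*} [Ring R] [AddCommGroup E] [Module R E]
    [TopologicalSpace E] [IsTopologicalAddGroup E] [T2Space E] {f : ℕ → E} (hf : Summable f)
    (hf' : Summable fun r => ((r + 1 : ℕ) : R) • f r) :
    ∑' r, ((r + 1 : ℕ) : R) • f r = ∑' r, f r + ∑' r, ((r + 1 : ℕ) : R) • f (r + 1) := by
  have hg : Summable fun r : ℕ => (r : R) • f r := by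
    simpa [add_smul] using hf'.sub hf
  calc ∑' r, ((r + 1 : ℕ) : R) • f r = ∑' r : ℕ, (f r + (r : R) • f r) := by
        simp [add_smul, add_comm]
    _ = ∑' r, f r + ∑' r : ℕ, (r : R) • f r := hf.tsum_add hg
    _ = ∑' r, f r + ∑' r, ((r + 1 : ℕ) : R) • f (r + 1) := by
        rw [hg.tsum_eq_zero_add]
        simp

def LinearMap.tsumOfSummable {ι R M N : Type*} [Semiring R] [AddCommMonoid M] [Module R M]
    [AddCommMonoid N] [Module R N] [TopologicalSpace N] [T2Space N] [ContinuousAdd N]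
    [ContinuousConstSMul R N] (f : ι → M →ₗ[R] N) (hf : ∀ x, Summable fun r => f r x) :
    M →ₗ[R] N where
  toFun x := ∑' r, f r x
  map_add' x y := by simpa only [map_add] using (hf x).tsum_add (hf y)
  map_smul' c x := by simpa only [map_smul, RingHom.id_apply] using (hf x).tsum_const_smul c

@[simp]
theorem LinearMap.tsumOfSummable_apply {ι R M N : Type*} [Semiring R] [AddCommMonoid M]
    [Module R M] [AddCommMonoid N] [Module R N] [TopologicalSpace N] [T2Space N] [ContinuousAdd N]
    [ContinuousConstSMul R N] (f : ι → M →ₗ[R] N) (hf : ∀ x, Summable fun r => f r x) (x : M) :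
    LinearMap.tsumOfSummable f hf x = ∑' r, f r x :=
  rfl

open scoped Matrix.Norms.L2Operator MatrixOrder in
theorem Matrix.span_posSemidef {m : Type*} [Fintype m] [DecidableEq m] :
    Submodule.span ℂ {A : Matrix m m ℂ | A.PosSemidef} = ⊤ := by
  simpa [Matrix.nonneg_iff_posSemidef] using CStarAlgebra.span_nonneg (A := Matrix m m ℂ)

section

variable {n k : ℕ} (B : Fin k → Fin k → Mn n)

theorem pathProd_succ' : ∀ (r : ℕ) (x : Fin (r + 2) → Fin k),
    pathProd B (r + 1) x = pathProd B r (Fin.tail x) * B (x 1) (x 0)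
  | 0, x => by simp [pathProd, Fin.last]
  | r + 1, x => by
    rw [pathProd, pathProd_succ' r, pathProd, ← mul_assoc]
    rfl

theorem pathsSet_one (i j : Fin k) : pathsSet k i j 1 = {![j, i]} := by
  ext x
  simp only [pathsSet, Finset.mem_filter, Finset.mem_univ, true_and, Finset.mem_singleton]
  constructor
  · rintro ⟨h0, h1, -⟩
    ext s
    fin_cases s <;> simp_all [Fin.last]
  · rintro rfl
    refine ⟨rfl, rfl, fun s hs0 hs1 => ?_⟩
    fin_cases s <;> simp_all [Fin.last]

theorem cons_mem_pathsSet_iff {i j a : Fin k} {r : ℕ} {y : Fin (r + 2) → Fin k} :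
    Fin.cons a y ∈ pathsSet k i j (r + 2) ↔ a = j ∧ y 0 ≠ i ∧ y ∈ pathsSet k i (y 0) (r + 1) := by
  simp only [pathsSet, Finset.mem_filter, Finset.mem_univ, true_and, Fin.forall_iff_succ,
    Fin.cons_zero, Fin.cons_succ, ← Fin.succ_last, Fin.succ_inj, (Fin.succ_ne_zero _).symm, ne_eq,
    Fin.succ_ne_zero, not_false_eq_true, not_true_eq_false, IsEmpty.forall_iff, forall_const]
  tauto

theorem apply_zero_of_mem_pathsSet {i j : Fin k} {r : ℕ} {x : Fin (r + 1) → Fin k}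
    (hx : x ∈ pathsSet k i j r) : x 0 = j :=
  (Finset.mem_filter.1 hx).2.1

theorem sum_pathsSet_succ {M : Type*} [AddCommMonoid M] (i j : Fin k) (r : ℕ)
    (f : (Fin (r + 3) → Fin k) → M) :
    ∑ x ∈ pathsSet k i j (r + 2), f x =
      ∑ l ∈ Finset.univ.filter (· ≠ i), ∑ y ∈ pathsSet k i l (r + 1), f (Fin.cons j y) := by
  have cons_tail {x} (hx : x ∈ pathsSet k i j (r + 2)) : Fin.cons j (Fin.tail x) = x := by
    rw [← apply_zero_of_mem_pathsSet hx, Fin.cons_self_tail]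
  rw [Finset.sum_sigma']
  refine Finset.sum_nbij' (fun x => ⟨x 1, Fin.tail x⟩) (fun p => Fin.cons j p.2) ?_ ?_
    (fun x hx => cons_tail hx) ?_ (fun x hx => by rw [cons_tail hx])
  · intro x hx
    rw [← Fin.cons_self_tail x, cons_mem_pathsSet_iff] at hx
    simpa [Fin.tail] using hx.2
  · rintro ⟨l, y⟩ hy
    rw [Finset.mem_sigma, Finset.mem_filter] at hy
    rw [cons_mem_pathsSet_iff, apply_zero_of_mem_pathsSet hy.2]
    exact ⟨rfl, hy.1.2, hy.2⟩
  · rintro ⟨l, y⟩ hy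
    rw [Finset.mem_sigma] at hy
    simpa using apply_zero_of_mem_pathsSet hy.2

-- As in `khat`, the index `r` stands for paths of length `r + 1`.
def pathSum (i j : Fin k) (r : ℕ) : Mn n →ₗ[ℂ] Mn n :=
  ∑ x ∈ pathsSet k i j (r + 1),
    LinearMap.mulRight ℂ (pathProd B (r + 1) x)ᴴ ∘ₗ LinearMap.mulLeft ℂ (pathProd B (r + 1) x)

variable {B}

theorem pathSum_apply (i j : Fin k) (r : ℕ) (X : Mn n) :
    pathSum B i j r X =
      ∑ x ∈ pathsSet k i j (r + 1), pathProd B (r + 1) x * X * (pathProd B (r + 1) x)ᴴ := by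
  simp [pathSum]

theorem pathSum_zero_apply (i j : Fin k) (X : Mn n) :
    pathSum B i j 0 X = B i j * X * (B i j)ᴴ := by
  simp [pathSum_apply, pathsSet_one, pathProd, Fin.last]

theorem pathSum_succ_apply (i j : Fin k) (r : ℕ) (X : Mn n) :
    pathSum B i j (r + 1) X =
      ∑ l ∈ Finset.univ.filter (· ≠ i), pathSum B i l r (B l j * X * (B l j)ᴴ) := by
  rw [pathSum_apply, sum_pathsSet_succ]
  refine Finset.sum_congr rfl fun l _ => ?_
  rw [pathSum_apply]
  refine Finset.sum_congr rfl fun y hy => ?_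
  rw [pathProd_succ', conjTranspose_mul]
  simp [apply_zero_of_mem_pathsSet hy, Matrix.mul_assoc]

variable (B) in
def PathSummable : Prop :=
  ∀ (i j : Fin k) (X : Mn n) (a b : Fin n),
    Summable fun r : ℕ => ((r + 1 : ℕ) : ℝ) * ‖pathSum B i j r X a b‖

theorem PathSummable.summable_smul (hS : PathSummable B) (i j : Fin k) (X : Mn n) :
    Summable fun r => ((r + 1 : ℕ) : ℂ) • pathSum B i j r X :=
  Pi.summable.2 fun a => Pi.summable.2 fun b => Summable.of_norm <| by
    simpa only [Matrix.smul_apply, norm_smul, Complex.norm_natCast] using hS i j X a b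

theorem PathSummable.summable (hS : PathSummable B) (i j : Fin k) (X : Mn n) :
    Summable fun r => pathSum B i j r X :=
  Pi.summable.2 fun a => Pi.summable.2 fun b => Summable.of_norm <|
    (hS i j X a b).of_nonneg_of_le (fun _ => norm_nonneg _)
      fun _ => le_mul_of_one_le_left (norm_nonneg _) (by simp)

variable (B) in
def HitsSurely : Prop :=
  ∀ i l : Fin k, i ≠ l → ∀ σ : Mn n, σ.PosSemidef → hitSum B i l σ = σ.trace

def hitMap (hS : PathSummable B) (i j : Fin k) : Mn n →ₗ[ℂ] Mn n :=
  LinearMap.tsumOfSummable (pathSum B i j) (hS.summable i j)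

def khatMap (hS : PathSummable B) (i j : Fin k) : Mn n →ₗ[ℂ] Mn n :=
  LinearMap.tsumOfSummable (fun r => ((r + 1 : ℕ) : ℂ) • pathSum B i j r) (hS.summable_smul i j)

theorem khatMap_apply (hS : PathSummable B) (i j : Fin k) (X : Mn n) :
    khatMap hS i j X = khat B i j X := by
  simp [khatMap, khat, pathSum_apply]

theorem trace_hitMap_eq_hitSum (hS : PathSummable B) (i j : Fin k) (X : Mn n) :
    (hitMap hS i j X).trace = hitSum B i j X := by
  simpa [hitMap, hitSum, pathSum_apply, trace_sum] using
    (hS.summable i j X).map_tsum (traceAddMonoidHom (Fin n) ℂ) continuous_id.matrix_trace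

theorem hitMap_eq_add_sum (hS : PathSummable B) (i j : Fin k) (X : Mn n) :
    hitMap hS i j X = B i j * X * (B i j)ᴴ +
      ∑ l ∈ Finset.univ.filter (· ≠ i), hitMap hS i l (B l j * X * (B l j)ᴴ) := by
  simp only [hitMap, LinearMap.tsumOfSummable_apply]
  rw [(hS.summable i j X).tsum_eq_zero_add, pathSum_zero_apply]
  simp_rw [pathSum_succ_apply]
  rw [Summable.tsum_finsetSum fun l _ => hS.summable i l _]

theorem khat_eq_hitMap_add_sum (hS : PathSummable B) (i j : Fin k) (X : Mn n) :
    khat B i j X = hitMap hS i j X +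
      ∑ l ∈ Finset.univ.filter (· ≠ i), khat B i l (B l j * X * (B l j)ᴴ) := by
  simp only [← khatMap_apply hS, khatMap, hitMap, LinearMap.tsumOfSummable_apply,
    LinearMap.smul_apply]
  rw [tsum_natCast_succ_smul (hS.summable i j X) (hS.summable_smul i j X)]
  simp_rw [pathSum_succ_apply, Finset.smul_sum]
  rw [Summable.tsum_finsetSum fun l _ => hS.summable_smul i l _]

theorem IsOQW.sum_trace_conj (hB : IsOQW B) (j : Fin k) (X : Mn n) :
    ∑ i, (B i j * X * (B i j)ᴴ).trace = X.trace := by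
  simp_rw [trace_mul_cycle (B _ j) X]
  rw [← trace_sum, ← Finset.sum_mul, hB j, Matrix.one_mul]

theorem trace_hitMap_eq_trace (hB : IsOQW B) (hS : PathSummable B) (hHit : HitsSurely B)
    (i j : Fin k) (X : Mn n) : (hitMap hS i j X).trace = X.trace := by
  have off_diag : ∀ i l : Fin k, i ≠ l → ∀ X, (hitMap hS i l X).trace = X.trace := by
    intro i l hil
    have : traceLinearMap (Fin n) ℂ ℂ ∘ₗ hitMap hS i l = traceLinearMap (Fin n) ℂ ℂ :=
      LinearMap.ext_on Matrix.span_posSemidef fun σ hσ => by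
        simpa [trace_hitMap_eq_hitSum] using hHit i l hil σ hσ
    exact LinearMap.congr_fun this
  rcases eq_or_ne i j with rfl | hij
  · rw [hitMap_eq_add_sum, trace_add, trace_sum,
      Finset.sum_congr rfl fun l hl => off_diag i l (Finset.mem_filter.1 hl).2.symm _,
      ← hB.sum_trace_conj i X, ← Finset.add_sum_erase _ _ (Finset.mem_univ i), Finset.filter_ne']
  · exact off_diag i j hij X

theorem trace_khat_eq_sum_add (hB : IsOQW B) (hS : PathSummable B) (hHit : HitsSurely B)
    (i j : Fin k) (X : Mn n) :
    (khat B i j X).trace =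
      ∑ l ∈ Finset.univ.filter (· ≠ i), (khat B i l (B l j * X * (B l j)ᴴ)).trace + X.trace := by
  rw [khat_eq_hitMap_add_sum hS, trace_add, trace_hitMap_eq_trace hB hS hHit, trace_sum, add_comm]

variable (B) in
theorem blockRep_apply (v : BlockVec n k) (i : Fin k) :
    blockRep B v i = ∑ j, B i j * v j * (B i j)ᴴ := by
  simp [blockRep]

theorem omegaMap_apply (v : BlockVec n k) (p : Fin k) :
    omegaMap n k v p = (∑ j, (v j).trace) • (((k : ℂ) * n)⁻¹ • (1 : Mn n)) := by
  simp [omegaMap, Finset.sum_smul]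

theorem omegaMap_eq_of_sum_trace_eq {v w : BlockVec n k}
    (h : ∑ j, (v j).trace = ∑ j, (w j).trace) : omegaMap n k v = omegaMap n k w := by
  ext p : 1
  rw [omegaMap_apply, omegaMap_apply, h]

theorem sum_trace_omegaMap (hn : n ≠ 0) (hk : k ≠ 0) (v : BlockVec n k) :
    ∑ p, (omegaMap n k v p).trace = ∑ j, (v j).trace := by
  simp only [omegaMap_apply, trace_smul, trace_one, Fintype.card_fin, smul_eq_mul,
    Finset.sum_const, Finset.card_univ, nsmul_eq_mul]
  field_simp

theorem IsOQW.sum_trace_blockRep (hB : IsOQW B) (v : BlockVec n k) :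
    ∑ i, (blockRep B v i).trace = ∑ j, (v j).trace := by
  simp_rw [blockRep_apply, trace_sum]
  rw [Finset.sum_comm]
  simp [hB.sum_trace_conj]

theorem IsOQW.sum_trace_apply_of_mul_eq_one (hB : IsOQW B) (hn : n ≠ 0) (hk : k ≠ 0)
    {Z : Module.End ℂ (BlockVec n k)} (hZ : (1 - blockRep B + omegaMap n k) * Z = 1)
    (v : BlockVec n k) : ∑ p, (Z v p).trace = ∑ p, (v p).trace := by
  have h := congr_arg (fun w : BlockVec n k => ∑ p, (w p).trace) (LinearMap.congr_fun hZ v)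
  simpa [trace_add, trace_sub, Finset.sum_add_distrib, Finset.sum_sub_distrib,
    hB.sum_trace_blockRep, sum_trace_omegaMap hn hk] using h

theorem sum_trace_single (j : Fin k) (X : Mn n) :
    ∑ q, ((Pi.single j X : BlockVec n k) q).trace = X.trace := by
  rw [Fintype.sum_eq_single j fun q hq => by rw [Pi.single_eq_of_ne hq, trace_zero],
    Pi.single_eq_same]

def hittingTimeMap (hS : PathSummable B) (i : Fin k) : BlockVec n k →ₗ[ℂ] ℂ :=
  ∑ q, traceLinearMap (Fin n) ℂ ℂ ∘ₗ khatMap hS i q ∘ₗ LinearMap.proj q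

theorem hittingTimeMap_apply (hS : PathSummable B) (i : Fin k) (v : BlockVec n k) :
    hittingTimeMap hS i v = ∑ q, (khat B i q (v q)).trace := by
  simp [hittingTimeMap, khatMap_apply]

theorem hittingTimeMap_single (hS : PathSummable B) (i j : Fin k) (X : Mn n) :
    hittingTimeMap hS i (Pi.single j X) = (khat B i j X).trace := by
  rw [hittingTimeMap_apply, Fintype.sum_eq_single j fun q hq => ?_, Pi.single_eq_same]
  rw [Pi.single_eq_of_ne hq, ← khatMap_apply hS, map_zero, trace_zero]

theorem hittingTimeMap_sub_blockRep (hB : IsOQW B) (hS : PathSummable B) (hHit : HitsSurely B)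
    {c : ℂ} (hc : ∀ (i : Fin k) (η : Mn n), (khat B i i η).trace = c * η.trace)
    (i : Fin k) (w : BlockVec n k) :
    hittingTimeMap hS i w - hittingTimeMap hS i (blockRep B w) + c * (blockRep B w i).trace =
      ∑ q, (w q).trace := by
  have first_step : ∀ q, (khat B i q (w q)).trace =
      ∑ l, (khat B i l (B l q * w q * (B l q)ᴴ)).trace - c * (B i q * w q * (B i q)ᴴ).trace +
        (w q).trace := by
    intro q
    rw [trace_khat_eq_sum_add hB hS hHit, ← hc, Finset.filter_ne',
      Finset.sum_erase_eq_sub (Finset.mem_univ i)]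
  have hΦ : hittingTimeMap hS i (blockRep B w) =
      ∑ q, ∑ l, (khat B i l (B l q * w q * (B l q)ᴴ)).trace := by
    simp only [hittingTimeMap_apply, blockRep_apply, ← khatMap_apply hS, map_sum, trace_sum]
    exact Finset.sum_comm
  rw [hittingTimeMap_apply, Finset.sum_congr rfl fun q _ => first_step q, hΦ, blockRep_apply,
    trace_sum, Finset.mul_sum, Finset.sum_add_distrib, Finset.sum_sub_distrib]
  ring

theorem hittingTimeMap_add_mul_trace_sub_eq (hB : IsOQW B) (hS : PathSummable B)
    (hHit : HitsSurely B)
    {c : ℂ} (hc : ∀ (i : Fin k) (η : Mn n), (khat B i i η).trace = c * η.trace)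
    (hn : n ≠ 0) (hk : k ≠ 0)
    {Z : Module.End ℂ (BlockVec n k)} (hZ : (1 - blockRep B + omegaMap n k) * Z = 1)
    (i : Fin k) (v : BlockVec n k) :
    hittingTimeMap hS i v + c * ((Z v i).trace - (v i).trace) =
      hittingTimeMap hS i (omegaMap n k v) - c * (omegaMap n k v i).trace + ∑ q, (v q).trace := by
  have hT := hB.sum_trace_apply_of_mul_eq_one hn hk hZ v
  have hv : v = Z v - blockRep B (Z v) + omegaMap n k v := by
    rw [← omegaMap_eq_of_sum_trace_eq hT]
    simpa using (LinearMap.congr_fun hZ v).symm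
  have hκ : hittingTimeMap hS i v = hittingTimeMap hS i (Z v) -
      hittingTimeMap hS i (blockRep B (Z v)) + hittingTimeMap hS i (omegaMap n k v) := by
    conv_lhs => rw [hv]
    rw [map_add, map_sub]
  have hvi : (v i).trace =
      (Z v i).trace - (blockRep B (Z v) i).trace + (omegaMap n k v i).trace := by
    conv_lhs => rw [hv]
    rw [Pi.add_apply, Pi.sub_apply, trace_add, trace_sub]
  linear_combination hκ + hittingTimeMap_sub_blockRep hB hS hHit hc i (Z v) - c * hvi + hT

theorem trace_khat_eq_mul_sub (hB : IsOQW B) (hS : PathSummable B) (hHit : HitsSurely B)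
    {c : ℂ} (hc : ∀ (i : Fin k) (η : Mn n), (khat B i i η).trace = c * η.trace)
    (hn : n ≠ 0) (hk : k ≠ 0)
    {Z : Module.End ℂ (BlockVec n k)} (hZ : (1 - blockRep B + omegaMap n k) * Z = 1)
    {i j : Fin k} (hij : i ≠ j) (ρ : Mn n) :
    (khat B i j ρ).trace = c * ((blockOf Z i i ρ).trace - (blockOf Z i j ρ).trace) := by
  have key (q : Fin k) := hittingTimeMap_add_mul_trace_sub_eq hB hS hHit hc hn hk hZ i
    (Pi.single q ρ)
  have hΩ : omegaMap n k (Pi.single j ρ) = omegaMap n k (Pi.single i ρ) :=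
    omegaMap_eq_of_sum_trace_eq (by rw [sum_trace_single, sum_trace_single])
  have key_j := key j
  have key_i := key i
  simp only [hittingTimeMap_single, Pi.single_eq_same, Pi.single_eq_of_ne hij, trace_zero,
    sum_trace_single, hΩ] at key_j key_i
  rw [blockOf, blockOf]
  linear_combination key_j - key_i + hc i ρ

end

theorem random_target_lemma_general {n k : ℕ}
    (B : Fin k → Fin k → Mn n) (hB : IsOQW B)
    (hSum : ∀ (i j : Fin k) (X : Mn n) (a b : Fin n),
      Summable fun r : ℕ => ((r + 1 : ℕ) : ℝ) *
        ‖(∑ x ∈ pathsSet k i j (r+1),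
            pathProd B (r+1) x * X * (pathProd B (r+1) x)ᴴ) a b‖)
    (hHit : ∀ i l : Fin k, i ≠ l → ∀ σ : Mn n, σ.PosSemidef →
      hitSum B i l σ = σ.trace)
    (Z : Module.End ℂ (BlockVec n k))
    (hZ2 : (1 - blockRep B + omegaMap n k) * Z = 1)
    (Kinv : Fin k → Mn n → Mn n)
    (hKinv : ∀ i : Fin k, Function.LeftInverse (Kinv i) (khat B i i) ∧
      Function.RightInverse (Kinv i) (khat B i i))
    (c : ℝ)
    (hc : ∀ (i : Fin k) (η : Mn n), (khat B i i η).trace = (c : ℂ) * η.trace) :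
    ∀ (ρ : Mn n), ρ.PosSemidef → ρ.trace = 1 → ∀ j : Fin k,
      ∑ i : Fin k, (Kinv i (if i = j then 0 else khat B i j ρ)).trace =
        (∑ i : Fin k, (blockOf Z i i ρ).trace) - 1 := by
  intro ρ _ hρ j
  have hS : PathSummable B := by simpa only [PathSummable, pathSum_apply] using hSum
  have hn : n ≠ 0 := by rintro rfl; simp at hρ
  have hk : k ≠ 0 := j.pos.ne'
  have hKinv_trace (i : Fin k) (Y : Mn n) : c * (Kinv i Y).trace = Y.trace := by
    rw [← hc, (hKinv i).2 Y]
  have hc0 : (c : ℂ) ≠ 0 := left_ne_zero_of_mul_eq_one ((hKinv_trace j ρ).trans hρ)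
  calc ∑ i, (Kinv i (if i = j then 0 else khat B i j ρ)).trace
      = ∑ i, ((blockOf Z i i ρ).trace - (blockOf Z i j ρ).trace) := by
        refine Finset.sum_congr rfl fun i _ => mul_left_cancel₀ hc0 ?_
        rw [hKinv_trace]
        split_ifs with hij
        · simp [hij]
        · exact trace_khat_eq_mul_sub hB hS hHit hc hn hk hZ2 hij ρ
    _ = (∑ i, (blockOf Z i i ρ).trace) - 1 := by
        have hZ_trace := hB.sum_trace_apply_of_mul_eq_one hn hk hZ2 (Pi.single j ρ)
        rw [sum_trace_single, hρ] at hZ_trace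
        rw [Finset.sum_sub_distrib, ← hZ_trace]
        rfl

/-- Random Target Lemma for OQWs (Corollary 2): under the hypotheses of the
Mean Hitting Time Formula, with `D̂` invertible and `Tr(k̂_{ii}(η)) = c Tr(η)` for
all `i, η`, the target time `t_⊙(ρ) = ∑_i Tr((D̂⁻¹N̂)_{ij}(ρ))` does not depend on
`j`: it equals `(∑_i Tr(Ẑ_{ii}(ρ))) - 1` for every density matrix `ρ`. -/
theorem random_target_lemma {n k : ℕ} (hn : 2 ≤ n) (hk : 2 ≤ k)
    (B : Fin k → Fin k → Mn n) (hB : IsOQW B) (herg : IsErgodic B)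
    (hSum : ∀ (i j : Fin k) (X : Mn n) (a b : Fin n),
      Summable fun r : ℕ => ((r + 1 : ℕ) : ℝ) *
        ‖(∑ x ∈ pathsSet k i j (r+1),
            pathProd B (r+1) x * X * (pathProd B (r+1) x)ᴴ) a b‖)
    (hHit : ∀ i l : Fin k, i ≠ l → ∀ σ : Mn n, σ.PosSemidef →
      hitSum B i l σ = σ.trace)
    (Z : Module.End ℂ (BlockVec n k))
    (hZ1 : Z * (1 - blockRep B + omegaMap n k) = 1)
    (hZ2 : (1 - blockRep B + omegaMap n k) * Z = 1)
    (Kinv : Fin k → Mn n → Mn n)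
    (hKinv : ∀ i : Fin k, Function.LeftInverse (Kinv i) (khat B i i) ∧
      Function.RightInverse (Kinv i) (khat B i i))
    (c : ℝ)
    (hc : ∀ (i : Fin k) (η : Mn n), (khat B i i η).trace = (c : ℂ) * η.trace) :
    ∀ (ρ : Mn n), ρ.PosSemidef → ρ.trace = 1 → ∀ j : Fin k,
      ∑ i : Fin k, (Kinv i (if i = j then 0 else khat B i j ρ)).trace =
        (∑ i : Fin k, (blockOf Z i i ρ).trace) - 1 :=
  random_target_lemma_general B hB hSum hHit Z hZ2 Kinv hKinv c hc
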